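/- arXiv:1311.3168 — 4 statements merged into one kernel-verified Lean document; each statement's English description precedes it below -/
import Mathlib

section
/- If u is a pair {s,t} of two distinct objects s ≠ t, then u is a set, i.e., u ∉ u. -/
/-- Extensional equality of objects: `s = t` iff they have the same members. -/
def eqE {Obj : Type} (mem : Obj → Obj → Prop) (s t : Obj) : Prop :=
  ∀ u, mem u s ↔ mem u t

/-- Inclusion: `a ⊆ b`. -/
def subE {Obj : Type} (mem : Obj → Obj → Prop) (a b : Obj) : Prop :=
  ∀ u, mem u a → mem u b

/-- `w` is the union `⋃ s`. -/
def isUnionOf {Obj : Type} (mem : Obj → Obj → Prop) (w s : Obj) : Prop :=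
  ∀ u, mem u w ↔ ∃ z, mem z s ∧ mem u z

/-- `t` is the successor `s ∪ {s}` of `s` (membership expressed directly). -/
def isSuccOf {Obj : Type} (mem : Obj → Obj → Prop) (t s : Obj) : Prop :=
  ∀ u, mem u t ↔ (mem u s ∨ eqE mem u s)

/-- `S` is an ordinal number with first number `α`:  `S ∉ α` and every
`X ∈ S ∪ {S}` satisfies `X ∈ α ∪ {α}` or (`α ∈ X` and `X = ⋃X ∪ {⋃X}`). -/
def isNat {Obj : Type} (mem : Obj → Obj → Prop) (α S : Obj) : Prop :=
  ¬ mem S α ∧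
  ∀ X, (mem X S ∨ eqE mem X S) →
    (mem X α ∨ eqE mem X α) ∨
    (mem α X ∧ ∃ U, isUnionOf mem U X ∧ isSuccOf mem X U)

theorem eqE_refl {Obj : Type} (mem : Obj → Obj → Prop) (s : Obj) : eqE mem s s :=
  fun _ => Iff.rfl

theorem eqE_of_mem_of_mem_self {Obj : Type} (mem : Obj → Obj → Prop)
    (indiv : ∀ p s, mem s p → mem p p → eqE mem s p) {p a b : Obj}
    (ha : mem a p) (hb : mem b p) (hp : mem p p) : eqE mem a b :=
  fun x => (indiv p a ha hp x).trans (indiv p b hb hp x).symm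

theorem pair_of_distinct_is_set_general {Obj : Type} (mem : Obj → Obj → Prop)
    (indiv : ∀ p s, mem s p → mem p p → eqE mem s p)
    (s t u : Obj) (hu : ∀ x, mem x u ↔ (eqE mem x s ∨ eqE mem x t))
    (hst : ¬ eqE mem s t) :
    ¬ mem u u := by
  intro huu
  have hs : mem s u := (hu s).mpr (Or.inl (eqE_refl mem s))
  have ht : mem t u := (hu t).mpr (Or.inr (eqE_refl mem t))
  exact hst (eqE_of_mem_of_mem_self mem indiv hs ht huu)

/-- A pair of two distinct objects is a set. -/
theorem pair_of_distinct_is_set {Obj : Type} (mem : Obj → Obj → Prop)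
    (subst : ∀ s t v, eqE mem s t → mem t v → mem s v)
    (indiv : ∀ p s, mem s p → mem p p → eqE mem s p)
    (s t u : Obj) (hu : ∀ x, mem x u ↔ (eqE mem x s ∨ eqE mem x t))
    (hst : ¬ eqE mem s t) :
    ¬ mem u u :=
  pair_of_distinct_is_set_general mem indiv s t u hu hst
end

section
/- If a set belongs to a transitive set s, then some set of individuals (a set all of whose members are individuals) is a member of s. -/
theorem subE_of_mem_of_transitive {Obj : Type} {mem : Obj → Obj → Prop} {s v : Obj}
    (htrans : ∀ u, (∃ z, mem z s ∧ mem u z) → mem u s) (hvs : mem v s) : subE mem v s :=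
  fun u huv => htrans u ⟨v, hvs, huv⟩

theorem mem_self_of_subE_of_minimal {Obj : Type} {mem : Obj → Obj → Prop} {s v : Obj}
    (hsub : subE mem v s) (hmin : ∀ u, mem u s → ¬ mem u u → ¬ mem u v) :
    ∀ z, mem z v → mem z z :=
  fun z hzv => by_contra fun hzz => hmin z (hsub z hzv) hzz hzv

theorem transitive_has_set_of_individuals_general {Obj : Type} (mem : Obj → Obj → Prop)
    (regularity : ∀ s, (∃ v, mem v s ∧ ¬ mem v v) →
      ∃ v, mem v s ∧ ¬ mem v v ∧ ∀ u, mem u s → ¬ mem u u → ¬ mem u v)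
    (s : Obj)
    (htrans : ∀ u, (∃ z, mem z s ∧ mem u z) → mem u s)
    (hset : ∃ v, mem v s ∧ ¬ mem v v) :
    ∃ w, mem w s ∧ ¬ mem w w ∧ ∀ z, mem z w → mem z z := by
  obtain ⟨v, hvs, hvv, hmin⟩ := regularity s hset
  exact ⟨v, hvs, hvv, mem_self_of_subE_of_minimal (subE_of_mem_of_transitive htrans hvs) hmin⟩

/-- If a set belongs to a transitive set `s`, then a set of individuals is a
member of `s`. -/
theorem transitive_has_set_of_individuals {Obj : Type} (mem : Obj → Obj → Prop)
    (nonemptyAx : ∀ t : Obj, ∃ u, mem u t)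
    (regularity : ∀ s, (∃ v, mem v s ∧ ¬ mem v v) →
      ∃ v, mem v s ∧ ¬ mem v v ∧ ∀ u, mem u s → ¬ mem u u → ¬ mem u v)
    (s : Obj)
    (htrans : ∀ u, (∃ z, mem z s ∧ mem u z) → mem u s)
    (hset : ∃ v, mem v s ∧ ¬ mem v v) :
    ∃ w, mem w s ∧ ¬ mem w w ∧ ∀ z, mem z w → mem z z :=
  transitive_has_set_of_individuals_general mem regularity s htrans hset
end

section
/- Every member of a natural number S that is not a member of the first number α is itself a natural number. -/
section

variable {Obj : Type} {mem : Obj → Obj → Prop}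

theorem mem_of_mem_of_isSuccOf_of_isUnionOf {S U X Y : Obj}
    (hU : isUnionOf mem U S) (hSU : isSuccOf mem S U)
    (hYX : mem Y X) (hXS : mem X S) : mem Y S :=
  (hSU Y).mpr (Or.inl ((hU Y).mpr ⟨X, hXS, hYX⟩))

namespace isNat

variable {α S X : Obj}

theorem exists_isSuccOf_isUnionOf (hS : isNat mem α S) (hXS : mem X S)
    (hXα : ¬ mem X α) : ∃ U, isUnionOf mem U S ∧ isSuccOf mem S U := by
  rcases hS.2 S (Or.inr fun _ => Iff.rfl) with (hSα | hSα) | ⟨_, hsucc⟩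
  · exact absurd hSα hS.1
  · exact absurd ((hSα X).mp hXS) hXα
  · exact hsucc

theorem mem_of_mem_of_mem {Y : Obj} (hS : isNat mem α S) (hXS : mem X S)
    (hXα : ¬ mem X α) (hYX : mem Y X) : mem Y S := by
  obtain ⟨U, hU, hSU⟩ := hS.exists_isSuccOf_isUnionOf hXS hXα
  exact mem_of_mem_of_isSuccOf_of_isUnionOf hU hSU hYX hXS

end isNat

end

theorem mem_of_nat_isNat_general {Obj : Type} (mem : Obj → Obj → Prop)
    (subst : ∀ s t v, eqE mem s t → mem t v → mem s v)
    (α : Obj)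
    (S : Obj) (hS : isNat mem α S) :
    ∀ X, mem X S → ¬ mem X α → isNat mem α X := by
  intro X hXS hXα
  refine ⟨hXα, fun Y hY => hS.2 Y (Or.inl ?_)⟩
  rcases hY with hYX | hYX
  · exact hS.mem_of_mem_of_mem hXS hXα hYX
  · exact subst Y X S hYX hXS

/-- Every member of a natural number that is not a member of the first number
is itself a natural number. -/
theorem mem_of_nat_isNat {Obj : Type} (mem : Obj → Obj → Prop)
    (subst : ∀ s t v, eqE mem s t → mem t v → mem s v)
    (indiv : ∀ p s, mem s p → mem p p → eqE mem s p)
    (pairing : ∀ s t, ∃ v, ∀ u, mem u v ↔ (eqE mem u s ∨ eqE mem u t))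
    (union : ∀ s, ∃ v, isUnionOf mem v s)
    (regularity : ∀ s, (∃ v, mem v s ∧ ¬ mem v v) →
      ∃ v, mem v s ∧ ¬ mem v v ∧ ∀ u, mem u s → ¬ mem u u → ¬ mem u v)
    (spec : ∀ (Φ : Obj → Prop) (s : Obj), (∃ u, mem u s ∧ Φ u) →
      ∃ v, ∀ u, mem u v ↔ (mem u s ∧ Φ u))
    (nonemptyAx : ∀ t : Obj, ∃ u, mem u t)
    (p q α : Obj) (hp : mem p p) (hq : mem q q)
    (hα : ∀ u, mem u α ↔ (eqE mem u p ∨ eqE mem u q))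
    (S : Obj) (hS : isNat mem α S) :
    ∀ X, mem X S → ¬ mem X α → isNat mem α X :=
  mem_of_nat_isNat_general mem subst α S hS
end

section
/- For natural numbers S and T, if S ⊆ T then S ∈ T or S = T. -/
/-!
The proof is an `∈`-induction on `T`, which regularity provides as long as the induction
hypothesis is only asked for non-individuals. Let `A ⊆ B` be natural numbers. If `B = α`, then
`A = α` since `α` consists of individuals. Otherwise `B = U ∪ {U}`, and `A = α ∈ B` or
`A = V ∪ {V}` with `V ∈ B`. If `V = U`, or `V ∈ U` with `U` an individual, then `A = B`.
If `V ∈ U` and `U` is not an individual, then `U` is a natural number with `A ⊆ U`, and the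
induction hypothesis gives `A ∈ U` or `A = U`, so `A ∈ B` either way.
-/

def isTransitive {Obj : Type} (mem : Obj → Obj → Prop) (X : Obj) : Prop :=
  ∀ z, mem z X → subE mem z X

section

variable {Obj : Type} {mem : Obj → Obj → Prop}

theorem eqE.refl (s : Obj) : eqE mem s s := fun _ => Iff.rfl

theorem eqE.symm {s t : Obj} (h : eqE mem s t) : eqE mem t s := fun u => (h u).symm

theorem eqE.trans {s t v : Obj} (h₁ : eqE mem s t) (h₂ : eqE mem t v) : eqE mem s v :=
  fun u => (h₁ u).trans (h₂ u)

theorem isSuccOf.mem_self {X U : Obj} (hX : isSuccOf mem X U) : mem U X :=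
  (hX U).2 (Or.inr (eqE.refl U))

theorem isSuccOf.transitive {X U : Obj} (hU : isUnionOf mem U X) (hX : isSuccOf mem X U) :
    isTransitive mem X :=
  fun z hz u hu => (hX u).2 (Or.inl ((hU u).2 ⟨z, hz, hu⟩))

theorem isSuccOf.congr {A V B U : Obj} (hA : isSuccOf mem A V) (hB : isSuccOf mem B U)
    (hVU : eqE mem V U) : eqE mem A B :=
  fun u => (hA u).trans <|
    (or_congr (hVU u) ⟨fun h => h.trans hVU, fun h => h.trans hVU.symm⟩).trans (hB u).symm

theorem mem_self_of_eqE (subst : ∀ s t v, eqE mem s t → mem t v → mem s v) {s t : Obj}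
    (h : eqE mem s t) (ht : mem t t) : mem s s :=
  (h s).2 (subst s t t h ht)

theorem isTransitive_of_forall_mem_self (subst : ∀ s t v, eqE mem s t → mem t v → mem s v)
    (indiv : ∀ p s, mem s p → mem p p → eqE mem s p) {X : Obj}
    (hX : ∀ z, mem z X → mem z z) : isTransitive mem X :=
  fun z hz u hu => subst u z X (indiv z u hu (hX z hz)) hz

theorem eqE_of_mem_of_subE_of_mem_self (subst : ∀ s t v, eqE mem s t → mem t v → mem s v)
    (indiv : ∀ p s, mem s p → mem p p → eqE mem s p) {x A : Obj} (hxA : mem x A)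
    (hAx : subE mem A x) (hx : mem x x) : eqE mem A x :=
  fun u => ⟨hAx u, fun hu => subst u x A (indiv x u hu hx) hxA⟩

variable {α : Obj}

theorem isNat.eqE_or_isSuccOf {S : Obj} (hS : isNat mem α S) :
    eqE mem S α ∨ (mem α S ∧ ∃ U, isUnionOf mem U S ∧ isSuccOf mem S U) := by
  rcases hS.2 S (Or.inr (eqE.refl S)) with (h | h) | h
  · exact absurd h hS.1
  · exact Or.inl h
  · exact Or.inr h

theorem isNat.transitive (hα : isTransitive mem α) {S : Obj} (hS : isNat mem α S) :
    isTransitive mem S := by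
  rcases hS.eqE_or_isSuccOf with h | ⟨-, U, hU, hSU⟩
  · exact fun z hz u hu => (h u).2 (hα z ((h z).1 hz) u hu)
  · exact isSuccOf.transitive hU hSU

theorem isNat.of_mem (subst : ∀ s t v, eqE mem s t → mem t v → mem s v)
    (hα : isTransitive mem α) {B U : Obj} (hB : isNat mem α B) (hUB : mem U B)
    (hUα : ¬ mem U α) : isNat mem α U :=
  ⟨hUα, fun X hX => hB.2 X <| Or.inl <|
    hX.elim (hB.transitive hα U hUB X) fun h => subst X U B h hUB⟩

theorem isNat.eqE_of_subE (subst : ∀ s t v, eqE mem s t → mem t v → mem s v)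
    (indiv : ∀ p s, mem s p → mem p p → eqE mem s p) {A : Obj} (hA : isNat mem α A)
    (hAα : subE mem A α) : eqE mem A α := by
  rcases hA.eqE_or_isSuccOf with h | ⟨hαA, -⟩
  · exact h
  · exact eqE_of_mem_of_subE_of_mem_self subst indiv hαA hAα (hAα α hαA)

theorem isTransitive.mem_induction
    (regularity : ∀ s, (∃ v, mem v s ∧ ¬ mem v v) →
      ∃ v, mem v s ∧ ¬ mem v v ∧ ∀ u, mem u s → ¬ mem u u → ¬ mem u v)
    (spec : ∀ (Φ : Obj → Prop) (s : Obj), (∃ u, mem u s ∧ Φ u) →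
      ∃ v, ∀ u, mem u v ↔ (mem u s ∧ Φ u))
    {T : Obj} (hT : isTransitive mem T) (Ψ : Obj → Prop)
    (step : ∀ B, (∀ U, mem U B → ¬ mem U U → Ψ U) → Ψ B) : Ψ T := by
  by_contra hΨT
  obtain ⟨U, hUT, hUU, hΨU⟩ : ∃ U, mem U T ∧ ¬ mem U U ∧ ¬ Ψ U := by
    by_contra! h
    exact hΨT (step T h)
  obtain ⟨D, hD⟩ := spec (fun B => ¬ mem B B ∧ ¬ Ψ B) T ⟨U, hUT, hUU, hΨU⟩
  obtain ⟨B, hBD, -, hBmin⟩ := regularity D ⟨U, (hD U).2 ⟨hUT, hUU, hΨU⟩, hUU⟩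
  obtain ⟨hBT, -, hΨB⟩ := (hD B).1 hBD
  refine hΨB (step B fun V hVB hVV => ?_)
  by_contra hΨV
  exact hBmin V ((hD V).2 ⟨hT B hBT V hVB, hVV, hΨV⟩) hVV hVB

theorem isNat.mem_or_eqE_of_subE
    (subst : ∀ s t v, eqE mem s t → mem t v → mem s v)
    (indiv : ∀ p s, mem s p → mem p p → eqE mem s p)
    (hα_mem_self : ∀ u, mem u α → mem u u)
    {B : Obj} (hB : isNat mem α B)
    (ih : ∀ U, mem U B → ¬ mem U U → isNat mem α U →
      ∀ A, isNat mem α A → subE mem A U → mem A U ∨ eqE mem A U)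
    {A : Obj} (hA : isNat mem α A) (hAB : subE mem A B) : mem A B ∨ eqE mem A B := by
  have hα_trans := isTransitive_of_forall_mem_self subst indiv hα_mem_self
  rcases hB.eqE_or_isSuccOf with hBα | ⟨hαB, U, -, hBU⟩
  · exact Or.inr <| (hA.eqE_of_subE subst indiv fun u hu => (hBα u).1 (hAB u hu)).trans hBα.symm
  rcases hA.eqE_or_isSuccOf with hAα | ⟨-, V, -, hAV⟩
  · exact Or.inl (subst A α B hAα hαB)
  have hUB : mem U B := hBU.mem_self
  rcases (hBU V).1 (hAB V hAV.mem_self) with hVU | hVU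
  swap
  · exact Or.inr (hAV.congr hBU hVU)
  by_cases hUU : mem U U
  · exact Or.inr (hAV.congr hBU (indiv U V hVU hUU))
  have hUnat : isNat mem α U := hB.of_mem subst hα_trans hUB fun h => hUU (hα_mem_self U h)
  have hAU : subE mem A U := fun a ha =>
    ((hAV a).1 ha).elim (hUnat.transitive hα_trans V hVU a) fun h => subst a V U h hVU
  rcases ih U hUB hUU hUnat A hA hAU with hAU | hAU
  · exact Or.inl ((hBU A).2 (Or.inl hAU))
  · exact Or.inl (subst A U B hAU hUB)

end

theorem subset_mem_or_eq_general {Obj : Type} (mem : Obj → Obj → Prop)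
    (subst : ∀ s t v, eqE mem s t → mem t v → mem s v)
    (indiv : ∀ p s, mem s p → mem p p → eqE mem s p)
    (regularity : ∀ s, (∃ v, mem v s ∧ ¬ mem v v) →
      ∃ v, mem v s ∧ ¬ mem v v ∧ ∀ u, mem u s → ¬ mem u u → ¬ mem u v)
    (spec : ∀ (Φ : Obj → Prop) (s : Obj), (∃ u, mem u s ∧ Φ u) →
      ∃ v, ∀ u, mem u v ↔ (mem u s ∧ Φ u))
    (p q α : Obj) (hp : mem p p) (hq : mem q q)
    (hα : ∀ u, mem u α ↔ (eqE mem u p ∨ eqE mem u q))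
    (S T : Obj) (hS : isNat mem α S) (hT : isNat mem α T)
    (hsub : subE mem S T) :
    mem S T ∨ eqE mem S T := by
  have hα_mem_self : ∀ u, mem u α → mem u u := fun u hu =>
    ((hα u).1 hu).elim (fun h => mem_self_of_eqE subst h hp) (fun h => mem_self_of_eqE subst h hq)
  have hα_trans := isTransitive_of_forall_mem_self subst indiv hα_mem_self
  exact (hT.transitive hα_trans).mem_induction regularity spec
    (fun B => isNat mem α B → ∀ A, isNat mem α A → subE mem A B → mem A B ∨ eqE mem A B)
    (fun B ih hB _ hA hAB => hB.mem_or_eqE_of_subE subst indiv hα_mem_self ih hA hAB) hT S hS hsub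

/-- For natural numbers, inclusion implies membership or equality. -/
theorem subset_mem_or_eq {Obj : Type} (mem : Obj → Obj → Prop)
    (subst : ∀ s t v, eqE mem s t → mem t v → mem s v)
    (indiv : ∀ p s, mem s p → mem p p → eqE mem s p)
    (pairing : ∀ s t, ∃ v, ∀ u, mem u v ↔ (eqE mem u s ∨ eqE mem u t))
    (union : ∀ s, ∃ v, isUnionOf mem v s)
    (regularity : ∀ s, (∃ v, mem v s ∧ ¬ mem v v) →
      ∃ v, mem v s ∧ ¬ mem v v ∧ ∀ u, mem u s → ¬ mem u u → ¬ mem u v)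
    (spec : ∀ (Φ : Obj → Prop) (s : Obj), (∃ u, mem u s ∧ Φ u) →
      ∃ v, ∀ u, mem u v ↔ (mem u s ∧ Φ u))
    (nonemptyAx : ∀ t : Obj, ∃ u, mem u t)
    (p q α : Obj) (hp : mem p p) (hq : mem q q)
    (hα : ∀ u, mem u α ↔ (eqE mem u p ∨ eqE mem u q))
    (S T : Obj) (hS : isNat mem α S) (hT : isNat mem α T)
    (hsub : subE mem S T) :
    mem S T ∨ eqE mem S T :=
  subset_mem_or_eq_general mem subst indiv regularity spec p q α hp hq hα S T hS hT hsub
end
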